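/- arXiv:2101.11151 — 2 statements merged into one kernel-verified Lean document; each statement's English description precedes it below -/
import Mathlib

section
/- Let M be a graded R-module, S a multiplicatively closed subset of the homogeneous elements of R, and N a graded R-submodule of M with S^{-1}N ≠ 0. If N is a graded 2-absorbing coprimary R-submodule of M, then S^{-1}N is a graded 2-absorbing coprimary S^{-1}R-submodule of S^{-1}M. -/
/-!
Everything is checked on representatives. For an `S⁻¹R`-submodule `K` of `S⁻¹M`, let `Kᶜ` be
its contraction, the preimage of `K` under `m ↦ m/1`. A fraction `c/u` maps `S⁻¹N` into `K`
exactly when `c` maps `N` into `Kᶜ`, and `Kᶜ` is graded when `K` is, because for `s` of degree `d`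
the degree-`g` component of `m/s` is `m_{d+g}/s`. So `xy S⁻¹N ⊆ K` for `x = a/s`, `y = b/t` gives
`ab N ⊆ Kᶜ`, and each of the three conclusions for `a`, `b`, `Kᶜ` localizes back
(`(a/s)ⁿ = aⁿ/sⁿ` for the graded radicals).
-/

open DirectSum Pointwise

variable {G : Type} [AddGroup G] [DecidableEq G]
variable {R : Type} [CommRing R] (𝒜 : G → AddSubgroup R) [GradedRing 𝒜]
variable {M : Type} [AddCommGroup M] [Module R M] (ℳ : G → AddSubgroup M)
  [SetLike.GradedSMul 𝒜 ℳ] [DirectSum.Decomposition ℳ]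

/-- A submodule is graded if it contains every homogeneous component of each of
its elements. -/
def IsGradedSubmodule (N : Submodule R M) : Prop :=
  ∀ (g : G) (m : M), m ∈ N → (DirectSum.decompose ℳ m g : M) ∈ N

/-- The graded radical of an ideal: all `r` such that for each `g` some positive
power of the degree-`g` component of `r` lies in `P`. -/
def gradRad (P : Ideal R) : Set R :=
  {r : R | ∀ g : G, ∃ n : ℕ, 0 < n ∧ ((DirectSum.decompose 𝒜 r g : R)) ^ n ∈ P}

/-- Graded 2-absorbing coprimary submodule. -/
def IsGr2AbsCoprimary (N : Submodule R M) : Prop :=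
  N ≠ ⊥ ∧ IsGradedSubmodule ℳ N ∧
  ∀ x y : R, (∃ g, x ∈ 𝒜 g) → (∃ g, y ∈ 𝒜 g) →
    ∀ K : Submodule R M, IsGradedSubmodule ℳ K →
      (∀ m ∈ N, (x * y) • m ∈ K) →
      x ∈ gradRad 𝒜 (K.colon N) ∨ y ∈ gradRad 𝒜 (K.colon N) ∨ x * y ∈ N.annihilator

/-- Graded 2-absorbing primary ideal. -/
def IsGr2AbsPrimaryIdeal (P : Ideal R) : Prop :=
  P ≠ ⊤ ∧ (∀ (g : G) (r : R), r ∈ P → (DirectSum.decompose 𝒜 r g : R) ∈ P) ∧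
  ∀ a b c : R, (∃ g, a ∈ 𝒜 g) → (∃ g, b ∈ 𝒜 g) → (∃ g, c ∈ 𝒜 g) →
    a * b * c ∈ P → a * b ∈ P ∨ a * c ∈ gradRad 𝒜 P ∨ b * c ∈ gradRad 𝒜 P

theorem mem_gradRad_of_pow_mem {P : Ideal R} {x : R} {i : G} (hx : x ∈ 𝒜 i) {n : ℕ}
    (hn : 0 < n) (hxn : x ^ n ∈ P) : x ∈ gradRad 𝒜 P := by
  intro g
  by_cases hg : g = i
  · subst hg
    exact ⟨n, hn, by rwa [DirectSum.decompose_of_mem_same 𝒜 hx]⟩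
  · exact ⟨1, one_pos, by simp [DirectSum.decompose_of_mem_ne 𝒜 hx (Ne.symm hg)]⟩

theorem exists_pow_mem_of_mem_gradRad {P : Ideal R} {x : R} {i : G} (hx : x ∈ 𝒜 i)
    (hxP : x ∈ gradRad 𝒜 P) : ∃ n, 0 < n ∧ x ^ n ∈ P := by
  simpa only [DirectSum.decompose_of_mem_same 𝒜 hx] using hxP i

namespace Submodule

variable {S : Submonoid R}

noncomputable abbrev contraction (K : Submodule (Localization S) (LocalizedModule S M)) :
    Submodule R M :=
  (K.restrictScalars R).comap (LocalizedModule.mkLinearMap S M)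

theorem mem_contraction {K : Submodule (Localization S) (LocalizedModule S M)} {m : M} :
    m ∈ K.contraction ↔ LocalizedModule.mk m 1 ∈ K :=
  Iff.rfl

theorem mk_mem_localized {N : Submodule R M} {m : M} (hm : m ∈ N) (s : S) :
    LocalizedModule.mk m s ∈ N.localized S :=
  (mem_localized' _ _ _ _ _).mpr ⟨m, hm, s, (IsLocalizedModule.mk_eq_mk' _ _).symm⟩

theorem mk_mem_colon_localized_iff (K : Submodule (Localization S) (LocalizedModule S M))
    (N : Submodule R M) (c : R) (u : S) :
    Localization.mk c u ∈ K.colon (N.localized S) ↔ c ∈ K.contraction.colon N := by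
  simp only [mem_colon]
  constructor
  · intro h m hm
    have hcm := K.smul_mem (Localization.mk (u : R) 1) (h _ (mk_mem_localized hm 1))
    rwa [LocalizedModule.mk_smul_mk, LocalizedModule.mk_smul_mk, one_mul, mul_one,
      ← Submonoid.smul_def, LocalizedModule.mk_cancel] at hcm
  · intro h z hz
    obtain ⟨m, hm, v, rfl⟩ := (mem_localized' _ _ _ _ _).mp hz
    have hcm := K.smul_mem (Localization.mk 1 (u * v)) (mem_contraction.mp (h m hm))
    rwa [LocalizedModule.mk_smul_mk, one_smul, mul_one, ← LocalizedModule.mk_smul_mk,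
      IsLocalizedModule.mk_eq_mk'] at hcm

theorem mk_mem_annihilator_localized {N : Submodule R M} {c : R} (hc : c ∈ N.annihilator)
    (u : S) : Localization.mk c u ∈ (N.localized S).annihilator := by
  rw [mem_annihilator]
  intro z hz
  obtain ⟨m, hm, v, rfl⟩ := (mem_localized' _ _ _ _ _).mp hz
  rw [← IsLocalizedModule.mk_eq_mk', LocalizedModule.mk_smul_mk,
    mem_annihilator.mp hc m hm, LocalizedModule.zero_mk]

end Submodule

section Localization

variable {S : Submonoid R}

theorem mk_mem_gradRad_colon_localized (𝒜' : G → AddSubgroup (Localization S)) [GradedRing 𝒜']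
    {K : Submodule (Localization S) (LocalizedModule S M)} {N : Submodule R M} {c : R} {u : S}
    {i j : G} (hc : c ∈ 𝒜 i) (hcu : Localization.mk c u ∈ 𝒜' j)
    (h : c ∈ gradRad 𝒜 (K.contraction.colon N)) :
    Localization.mk c u ∈ gradRad 𝒜' (K.colon (N.localized S)) := by
  obtain ⟨n, hn, hcn⟩ := exists_pow_mem_of_mem_gradRad 𝒜 hc h
  refine mem_gradRad_of_pow_mem 𝒜' hcu hn ?_
  rw [Localization.mk_pow]
  exact (Submodule.mk_mem_colon_localized_iff K N _ _).mpr hcn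

variable {ℳ' : G → AddSubgroup (LocalizedModule S M)} [DirectSum.Decomposition ℳ']
  (hℳ' : ∀ (g : G) (x : LocalizedModule S M), x ∈ ℳ' g ↔
    ∃ (h : G) (m : M) (s : S), m ∈ ℳ h ∧ (s : R) ∈ 𝒜 (h - g) ∧ x = LocalizedModule.mk m s)
include hℳ'
omit [SetLike.GradedSMul 𝒜 ℳ]

omit [GradedRing 𝒜] in
theorem decompose_localizedModule_mk {s : S} {d : G} (hs : (s : R) ∈ 𝒜 d) (m : M) (g : G) :
    (DirectSum.decompose ℳ' (LocalizedModule.mk m s) g : LocalizedModule S M)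
      = LocalizedModule.mk (DirectSum.decompose ℳ m (d + g) : M) s := by
  induction m using DirectSum.Decomposition.inductionOn ℳ with
  | zero => simp
  | @homogeneous h m =>
    have hmem : LocalizedModule.mk (m : M) s ∈ ℳ' (-d + h) :=
      (hℳ' _ _).mpr ⟨h, m, s, m.2, by rwa [sub_eq_add_neg, neg_add_rev, neg_neg,
        add_neg_cancel_left], rfl⟩
    by_cases hg : g = -d + h
    · subst hg
      rw [DirectSum.decompose_of_mem_same ℳ' hmem, add_neg_cancel_left,
        DirectSum.decompose_coe, DirectSum.of_eq_same]
    · have hh : h ≠ d + g := fun hh => hg (by rw [hh, neg_add_cancel_left])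
      rw [DirectSum.decompose_of_mem_ne ℳ' hmem (Ne.symm hg), DirectSum.decompose_coe,
        DirectSum.of_eq_of_ne _ _ _ hh.symm, ZeroMemClass.coe_zero, LocalizedModule.zero_mk]
  | add m m' hm hm' =>
    simp only [DirectSum.decompose_add, DirectSum.add_apply, AddSubgroup.coe_add,
      IsLocalizedModule.mk_eq_mk', IsLocalizedModule.mk'_add] at hm hm' ⊢
    rw [hm, hm']

omit [GradedRing 𝒜] in
theorem IsGradedSubmodule.localized (hS : ∀ s ∈ S, ∃ g, s ∈ 𝒜 g) {N : Submodule R M}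
    (hN : IsGradedSubmodule ℳ N) : IsGradedSubmodule ℳ' (N.localized S) := by
  intro g z hz
  obtain ⟨m, hm, u, rfl⟩ := (Submodule.mem_localized' _ _ _ _ _).mp hz
  obtain ⟨d, hd⟩ := hS u u.2
  rw [← IsLocalizedModule.mk_eq_mk', decompose_localizedModule_mk 𝒜 ℳ hℳ' hd]
  exact Submodule.mk_mem_localized (hN _ _ hm) u

theorem IsGradedSubmodule.contraction {K : Submodule (Localization S) (LocalizedModule S M)}
    (hK : IsGradedSubmodule ℳ' K) : IsGradedSubmodule ℳ K.contraction := by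
  intro g m hm
  have h1 : ((1 : S) : R) ∈ 𝒜 0 := SetLike.one_mem_graded 𝒜
  have hgm := hK g _ (Submodule.mem_contraction.mp hm)
  rwa [decompose_localizedModule_mk 𝒜 ℳ hℳ' h1, zero_add] at hgm

end Localization

theorem stmt_7 (S : Submonoid R) (hS : ∀ s ∈ S, ∃ g, s ∈ 𝒜 g)
    (𝒜' : G → AddSubgroup (Localization S)) [GradedRing 𝒜']
    (h𝒜' : ∀ (g : G) (x : Localization S), x ∈ 𝒜' g ↔
      ∃ (h : G) (a : R) (s : S), a ∈ 𝒜 h ∧ (s : R) ∈ 𝒜 (h - g) ∧ x = Localization.mk a s)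
    (ℳ' : G → AddSubgroup (LocalizedModule S M))
    [DirectSum.Decomposition ℳ']
    (hℳ' : ∀ (g : G) (x : LocalizedModule S M), x ∈ ℳ' g ↔
      ∃ (h : G) (m : M) (s : S), m ∈ ℳ h ∧ (s : R) ∈ 𝒜 (h - g) ∧ x = LocalizedModule.mk m s)
    (N : Submodule R M) (hN : IsGr2AbsCoprimary 𝒜 ℳ N)
    (hne : N.localized S ≠ ⊥) :
    IsGr2AbsCoprimary 𝒜' ℳ' (N.localized S) := by
  obtain ⟨-, hNgr, hN2⟩ := hN
  refine ⟨hne, hNgr.localized 𝒜 ℳ hℳ' hS, ?_⟩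
  rintro x y ⟨i, hx⟩ ⟨j, hy⟩ K hK hxy
  obtain ⟨i₀, a, s, ha, -, rfl⟩ := (h𝒜' i x).mp hx
  obtain ⟨j₀, b, t, hb, -, rfl⟩ := (h𝒜' j y).mp hy
  have hab : a * b ∈ K.contraction.colon N := by
    rw [← Submodule.mk_mem_colon_localized_iff K N _ (s * t), ← Localization.mk_mul]
    exact Submodule.mem_colon.mpr hxy
  rcases hN2 a b ⟨i₀, ha⟩ ⟨j₀, hb⟩ _ (hK.contraction 𝒜 ℳ hℳ') (Submodule.mem_colon.mp hab)
    with haK | hbK | habN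
  · exact Or.inl (mk_mem_gradRad_colon_localized 𝒜 𝒜' ha hx haK)
  · exact Or.inr (Or.inl (mk_mem_gradRad_colon_localized 𝒜 𝒜' hb hy hbK))
  · rw [Localization.mk_mul]
    exact Or.inr (Or.inr (Submodule.mk_mem_annihilator_localized habN _))
end

section
/- Let R = R₁ × R₂ be a product of G-graded rings and M = M₁ × M₂. If N₁ is a graded 2-absorbing coprimary R₁-submodule of M₁ and N = N₁ × {0}, then Ann_R(N) is a graded 2-absorbing primary ideal of R. -/
open DirectSum Pointwise

variable {G : Type} [AddGroup G] [DecidableEq G]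
variable {R : Type} [CommRing R] (𝒜 : G → AddSubgroup R) [GradedRing 𝒜]
variable {M : Type} [AddCommGroup M] [Module R M] (ℳ : G → AddSubgroup M)
  [SetLike.GradedSMul 𝒜 ℳ] [DirectSum.Decomposition ℳ]

/-- Graded primary ideal. -/
def IsGrPrimaryIdeal (P : Ideal R) : Prop :=
  P ≠ ⊤ ∧ (∀ (g : G) (r : R), r ∈ P → (DirectSum.decompose 𝒜 r g : R) ∈ P) ∧
  ∀ a b : R, (∃ g, a ∈ 𝒜 g) → (∃ g, b ∈ 𝒜 g) →
    a * b ∈ P → a ∈ P ∨ b ∈ gradRad 𝒜 P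

/-!
`Ann(N₁ × 0)` is the preimage of `Ann(N₁)` under the first projection, and such preimages of graded
2-absorbing primary ideals of `R₁` are again graded 2-absorbing primary. So it suffices that the
annihilator of a graded 2-absorbing coprimary submodule `N` is graded 2-absorbing primary. Given
homogeneous `a, b, c` with `abcN = 0`, apply the coprimary condition to `a, b` and the graded
submodule `K = {m | c • m = 0}`: if `aⁿ ∈ (K : N)` then `aⁿc ∈ Ann(N)`, hence `(ac)ⁿ ∈ Ann(N)`.
-/

section GradedSMul

variable {S V : Type*} [Ring S] [AddCommGroup V] [Module S V] {𝒮 : G → AddSubgroup S}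
  (𝒱 : G → AddSubgroup V) [SetLike.GradedSMul 𝒮 𝒱] [Decomposition 𝒱]

theorem decompose_smul_of_mem_left {i : G} {c : S} (hc : c ∈ 𝒮 i) (m : V) (g : G) :
    (decompose 𝒱 (c • m) (i + g) : V) = c • (decompose 𝒱 m g : V) := by
  induction m using DirectSum.Decomposition.inductionOn 𝒱 with
  | zero => simp
  | @homogeneous h x =>
    have hcx : c • (x : V) ∈ 𝒱 (i + h) := SetLike.GradedSMul.smul_mem hc x.2
    by_cases hgh : h = g
    · subst hgh
      rw [decompose_of_mem_same 𝒱 hcx, decompose_of_mem_same 𝒱 x.2]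
    · rw [decompose_of_mem_ne 𝒱 hcx (fun hh => hgh (add_left_cancel hh)),
        decompose_of_mem_ne 𝒱 x.2 hgh, smul_zero]
  | add m m' hm hm' =>
    simp only [smul_add, decompose_add, DirectSum.add_apply, AddSubgroup.coe_add, hm, hm']

theorem decompose_smul_of_mem_right [Decomposition 𝒮] {j : G} {m : V} (hm : m ∈ 𝒱 j) (r : S)
    (g : G) : (decompose 𝒱 (r • m) (g + j) : V) = (decompose 𝒮 r g : S) • m := by
  induction r using DirectSum.Decomposition.inductionOn 𝒮 with
  | zero => simp
  | @homogeneous h x =>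
    have hxm : (x : S) • m ∈ 𝒱 (h + j) := SetLike.GradedSMul.smul_mem x.2 hm
    by_cases hgh : h = g
    · subst hgh
      rw [decompose_of_mem_same 𝒱 hxm, decompose_of_mem_same 𝒮 x.2]
    · rw [decompose_of_mem_ne 𝒱 hxm (fun hh => hgh (add_right_cancel hh)),
        decompose_of_mem_ne 𝒮 x.2 hgh, zero_smul]
  | add r r' hr hr' =>
    simp only [add_smul, decompose_add, DirectSum.add_apply, AddSubgroup.coe_add, hr, hr']

end GradedSMul

theorem isGradedSubmodule_torsionBy {S V : Type} [CommRing S] [AddCommGroup V] [Module S V]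
    {𝒮 : G → AddSubgroup S} (𝒱 : G → AddSubgroup V) [SetLike.GradedSMul 𝒮 𝒱] [Decomposition 𝒱]
    {c : S} {i : G} (hc : c ∈ 𝒮 i) : IsGradedSubmodule 𝒱 (Submodule.torsionBy S V c) := by
  intro g m hm
  rw [Submodule.mem_torsionBy_iff] at hm ⊢
  rw [← decompose_smul_of_mem_left 𝒱 hc, hm, decompose_zero, DirectSum.zero_apply,
    ZeroMemClass.coe_zero]

theorem IsGradedSubmodule.decompose_mem_annihilator {N : Submodule R M}
    (hN : IsGradedSubmodule ℳ N) {r : R} (hr : r ∈ N.annihilator) (g : G) :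
    (decompose 𝒜 r g : R) ∈ N.annihilator := by
  classical
  rw [Submodule.mem_annihilator] at hr ⊢
  intro m hm
  -- On a homogeneous `x ∈ ℳ j`, `r_g • x` is the degree-`g + j` component of `r • x = 0`.
  have homogeneous_case : ∀ j, ∀ x ∈ N, x ∈ ℳ j → (decompose 𝒜 r g : R) • x = 0 := by
    intro j x hxN hx
    rw [← decompose_smul_of_mem_right ℳ hx, hr x hxN, decompose_zero, DirectSum.zero_apply,
      ZeroMemClass.coe_zero]
  rw [← sum_support_decompose ℳ m, Finset.smul_sum]
  exact Finset.sum_eq_zero fun j _ => homogeneous_case j _ (hN j m hm) (SetLike.coe_mem _)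

theorem mem_gradRad_iff_of_mem {P : Ideal R} {x : R} {i : G} (hx : x ∈ 𝒜 i) :
    x ∈ gradRad 𝒜 P ↔ ∃ n, 0 < n ∧ x ^ n ∈ P := by
  refine ⟨fun h => by simpa only [decompose_of_mem_same 𝒜 hx] using h i, ?_⟩
  rintro ⟨n, hn, hxn⟩ g
  by_cases hig : i = g
  · subst hig
    exact ⟨n, hn, by rwa [decompose_of_mem_same 𝒜 hx]⟩
  · exact ⟨1, one_pos, by simp [decompose_of_mem_ne 𝒜 hx hig]⟩

theorem mem_colon_torsionBy_iff {N : Submodule R M} {c r : R} :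
    r ∈ (Submodule.torsionBy R M c).colon (N : Set M) ↔ c * r ∈ N.annihilator := by
  simp only [Submodule.mem_colon, SetLike.mem_coe, Submodule.mem_torsionBy_iff,
    Submodule.mem_annihilator, smul_smul]

theorem mul_mem_gradRad_annihilator_of_mem_gradRad_colon {N : Submodule R M} {x c : R}
    {i j : G} (hx : x ∈ 𝒜 i) (hc : c ∈ 𝒜 j)
    (hrad : x ∈ gradRad 𝒜 ((Submodule.torsionBy R M c).colon (N : Set M))) :
    x * c ∈ gradRad 𝒜 N.annihilator := by
  obtain ⟨n, hn, hxn⟩ := (mem_gradRad_iff_of_mem 𝒜 hx).1 hrad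
  rw [mem_colon_torsionBy_iff] at hxn
  refine (mem_gradRad_iff_of_mem 𝒜 (SetLike.mul_mem_graded hx hc)).2 ⟨n, hn, ?_⟩
  have hpow : (x * c) ^ n = c * x ^ n * c ^ (n - 1) := by
    rw [mul_pow, ← pow_sub_mul_pow c hn]
    ring
  rw [hpow]
  exact Ideal.mul_mem_right _ _ hxn

theorem IsGr2AbsCoprimary.isGr2AbsPrimaryIdeal_annihilator {N : Submodule R M}
    (hN : IsGr2AbsCoprimary 𝒜 ℳ N) : IsGr2AbsPrimaryIdeal 𝒜 N.annihilator := by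
  obtain ⟨hN_ne_bot, hN_graded, hN_absorbing⟩ := hN
  refine ⟨fun h => hN_ne_bot (Submodule.annihilator_eq_top_iff.1 h),
    fun g r hr => hN_graded.decompose_mem_annihilator 𝒜 ℳ hr g, ?_⟩
  rintro a b c ⟨i, ha⟩ ⟨j, hb⟩ ⟨k, hc⟩ habc
  have hab : ∀ m ∈ N, (a * b) • m ∈ Submodule.torsionBy R M c := by
    intro m hm
    rw [Submodule.mem_torsionBy_iff, smul_smul, mul_comm c]
    exact Submodule.mem_annihilator.1 habc m hm
  rcases hN_absorbing a b ⟨i, ha⟩ ⟨j, hb⟩ _ (isGradedSubmodule_torsionBy ℳ hc) hab with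
    hrad | hrad | hann
  · exact Or.inr (Or.inl (mul_mem_gradRad_annihilator_of_mem_gradRad_colon 𝒜 ha hc hrad))
  · exact Or.inr (Or.inr (mul_mem_gradRad_annihilator_of_mem_gradRad_colon 𝒜 hb hc hrad))
  · exact Or.inl hann

section Product

variable {R₁ R₂ : Type} [CommRing R₁] [CommRing R₂]

theorem fst_decompose_prod {ι : Type*} [DecidableEq ι] (𝒜₁ : ι → AddSubgroup R₁)
    (𝒜₂ : ι → AddSubgroup R₂) [Decomposition 𝒜₁] [Decomposition fun i => (𝒜₁ i).prod (𝒜₂ i)]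
    (r : R₁ × R₂) (g : ι) :
    (decompose (fun i => (𝒜₁ i).prod (𝒜₂ i)) r g : R₁ × R₂).1 = decompose 𝒜₁ r.1 g := by
  induction r using DirectSum.Decomposition.inductionOn (fun i => (𝒜₁ i).prod (𝒜₂ i)) with
  | zero => simp
  | @homogeneous h x =>
    have hx1 : (x : R₁ × R₂).1 ∈ 𝒜₁ h := (AddSubgroup.mem_prod.1 x.2).1
    by_cases hgh : h = g
    · subst hgh
      rw [decompose_of_mem_same (fun i => (𝒜₁ i).prod (𝒜₂ i)) x.2,
        decompose_of_mem_same 𝒜₁ hx1]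
    · rw [decompose_of_mem_ne (fun i => (𝒜₁ i).prod (𝒜₂ i)) x.2 hgh,
        decompose_of_mem_ne 𝒜₁ hx1 hgh, Prod.fst_zero]
  | add r r' hr hr' =>
    simp only [Prod.fst_add, decompose_add, DirectSum.add_apply, AddSubgroup.coe_add, hr, hr']

variable (𝒜₁ : G → AddSubgroup R₁) (𝒜₂ : G → AddSubgroup R₂) [GradedRing 𝒜₁]
  [GradedRing fun g => (𝒜₁ g).prod (𝒜₂ g)]

theorem mem_gradRad_comap_fst_iff {P : Ideal R₁} {x : R₁ × R₂} :
    x ∈ gradRad (fun g => (𝒜₁ g).prod (𝒜₂ g)) (P.comap (RingHom.fst R₁ R₂)) ↔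
      x.1 ∈ gradRad 𝒜₁ P := by
  simp only [gradRad, Set.mem_ofPred_eq, Ideal.mem_comap, RingHom.coe_fst, Prod.pow_fst,
    fst_decompose_prod]

theorem IsGr2AbsPrimaryIdeal.comap_fst {P : Ideal R₁} (hP : IsGr2AbsPrimaryIdeal 𝒜₁ P) :
    IsGr2AbsPrimaryIdeal (fun g => (𝒜₁ g).prod (𝒜₂ g)) (P.comap (RingHom.fst R₁ R₂)) := by
  obtain ⟨hP_ne_top, hP_graded, hP_absorbing⟩ := hP
  refine ⟨Ideal.comap_ne_top _ hP_ne_top, fun g r hr => ?_, ?_⟩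
  · rw [Ideal.mem_comap, RingHom.coe_fst, fst_decompose_prod]
    exact hP_graded g r.1 hr
  · rintro a b c ⟨i, ha⟩ ⟨j, hb⟩ ⟨k, hc⟩ habc
    simp only [mem_gradRad_comap_fst_iff, Ideal.mem_comap, RingHom.coe_fst, Prod.fst_mul]
      at habc ⊢
    exact hP_absorbing a.1 b.1 c.1 ⟨i, (AddSubgroup.mem_prod.1 ha).1⟩
      ⟨j, (AddSubgroup.mem_prod.1 hb).1⟩ ⟨k, (AddSubgroup.mem_prod.1 hc).1⟩ habc

end Product

theorem annihilator_eq_comap_fst {R₁ R₂ M₁ M₂ : Type*} [CommRing R₁] [CommRing R₂]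
    [AddCommGroup M₁] [AddCommGroup M₂] [Module R₁ M₁] [Module R₂ M₂]
    [Module (R₁ × R₂) (M₁ × M₂)]
    (hsmul : ∀ (r : R₁ × R₂) (m : M₁ × M₂), r • m = (r.1 • m.1, r.2 • m.2))
    {N₁ : Submodule R₁ M₁} {N : Submodule (R₁ × R₂) (M₁ × M₂)}
    (hNset : (N : Set (M₁ × M₂)) = (N₁ : Set M₁) ×ˢ ({0} : Set M₂)) :
    N.annihilator = N₁.annihilator.comap (RingHom.fst R₁ R₂) := by
  have hmemN : ∀ m : M₁ × M₂, m ∈ N ↔ m.1 ∈ N₁ ∧ m.2 = 0 := fun m => by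
    rw [← SetLike.mem_coe, hNset]
    rfl
  ext r
  simp only [Ideal.mem_comap, RingHom.coe_fst, Submodule.mem_annihilator, hsmul, Prod.forall,
    hmemN, Prod.mk_eq_zero]
  constructor
  · exact fun h m hm => (h m 0 ⟨hm, rfl⟩).1
  · rintro h m₁ m₂ ⟨hm₁, rfl⟩
    exact ⟨h m₁ hm₁, smul_zero _⟩

variable {R₁ R₂ : Type} [CommRing R₁] [CommRing R₂]
  (𝒜₁ : G → AddSubgroup R₁) [GradedRing 𝒜₁]
  (𝒜₂ : G → AddSubgroup R₂) [GradedRing 𝒜₂]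
  {M₁ M₂ : Type} [AddCommGroup M₁] [AddCommGroup M₂]
  [Module R₁ M₁] [Module R₂ M₂]
  (ℳ₁ : G → AddSubgroup M₁) [SetLike.GradedSMul 𝒜₁ ℳ₁] [DirectSum.Decomposition ℳ₁]
  (ℳ₂ : G → AddSubgroup M₂) [SetLike.GradedSMul 𝒜₂ ℳ₂] [DirectSum.Decomposition ℳ₂]
  [GradedRing (fun g => (𝒜₁ g).prod (𝒜₂ g))]
  [Module (R₁ × R₂) (M₁ × M₂)]
  [SetLike.GradedSMul (fun g => (𝒜₁ g).prod (𝒜₂ g)) (fun g => (ℳ₁ g).prod (ℳ₂ g))]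
  [DirectSum.Decomposition (fun g => (ℳ₁ g).prod (ℳ₂ g))]

theorem stmt_14
    (hsmul : ∀ (r : R₁ × R₂) (m : M₁ × M₂), r • m = (r.1 • m.1, r.2 • m.2))
    (N₁ : Submodule R₁ M₁) (hN₁ : IsGr2AbsCoprimary 𝒜₁ ℳ₁ N₁)
    (N : Submodule (R₁ × R₂) (M₁ × M₂))
    (hNset : (N : Set (M₁ × M₂)) = (N₁ : Set M₁) ×ˢ ({0} : Set M₂)) :
    IsGr2AbsPrimaryIdeal (fun g => (𝒜₁ g).prod (𝒜₂ g)) N.annihilator := by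
  rw [annihilator_eq_comap_fst hsmul hNset]
  exact hN₁.isGr2AbsPrimaryIdeal_annihilator.comap_fst 𝒜₁ 𝒜₂
end
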